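/- arXiv:2307.13964 — 9 statements merged into one kernel-verified Lean document; each statement's English description precedes it below -/
import Mathlib

section
/- Let P be a finite nonempty poset and let G_P be its cover-incomparability graph. Then G_P is a connected graph. -/
open SimpleGraph

/-- The cover-incomparability graph of a poset `V`: distinct `u, v` are adjacent iff
`u` covers `v`, `v` covers `u`, or `u` and `v` are incomparable. -/
def ciGraph (V : Type*) [PartialOrder V] : SimpleGraph V where
  Adj u v := u ⋖ v ∨ v ⋖ u ∨ (¬ u ≤ v ∧ ¬ v ≤ u)
  symm := by
    constructor
    intro u v h
    rcases h with h | h | h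
    · exact Or.inr (Or.inl h)
    · exact Or.inl h
    · exact Or.inr (Or.inr ⟨h.2, h.1⟩)
  loopless := by
    constructor
    intro u h
    rcases h with h | h | h
    · exact h.ne rfl
    · exact h.ne rfl
    · exact h.1 le_rfl

/-- A graph is a C-I graph if it is isomorphic to the cover-incomparability graph
of some finite poset. -/
def IsCIGraph {W : Type u} (G : SimpleGraph W) : Prop :=
  ∃ (V : Type u) (inst : PartialOrder V) (_ : Finite V),
    Nonempty (G ≃g @ciGraph V inst)

/-- A vertex is simplicial if its neighborhood is a clique. -/
def IsSimplicialVertex {V : Type*} (G : SimpleGraph V) (v : V) : Prop :=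
  G.IsClique (G.neighborSet v)

/-- A graph is chordal if it has no induced cycle of length greater than 3. -/
def IsChordal {V : Type*} (G : SimpleGraph V) : Prop :=
  ∀ n : ℕ, 3 < n → IsEmpty (cycleGraph n ↪g G)

/-- A cograph: no induced path on four vertices. -/
def IsCograph {V : Type*} (G : SimpleGraph V) : Prop :=
  ¬ ∃ a b c d : V, a ≠ b ∧ a ≠ c ∧ a ≠ d ∧ b ≠ c ∧ b ≠ d ∧ c ≠ d ∧
    G.Adj a b ∧ G.Adj b c ∧ G.Adj c d ∧ ¬ G.Adj a c ∧ ¬ G.Adj a d ∧ ¬ G.Adj b d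

/-- `G` has exactly two independent simplicial vertices. -/
def HasExactlyTwoIndepSimplicial {V : Type*} (G : SimpleGraph V) : Prop :=
  (∃ a b : V, a ≠ b ∧ ¬ G.Adj a b ∧ IsSimplicialVertex G a ∧ IsSimplicialVertex G b) ∧
  ¬ ∃ a b c : V, a ≠ b ∧ a ≠ c ∧ b ≠ c ∧ ¬ G.Adj a b ∧ ¬ G.Adj a c ∧ ¬ G.Adj b c ∧
    IsSimplicialVertex G a ∧ IsSimplicialVertex G b ∧ IsSimplicialVertex G c

/-- A complete graph: all distinct vertices adjacent. -/
def IsCompleteGraph {V : Type*} (G : SimpleGraph V) : Prop :=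
  ∀ u v : V, u ≠ v → G.Adj u v

/-- A maximal clique of `G`. -/
def IsMaxClique {V : Type*} (G : SimpleGraph V) (s : Set V) : Prop :=
  G.IsClique s ∧ ∀ t : Set V, G.IsClique t → s ⊆ t → t = s

theorem SimpleGraph.hasse_reachable_of_le {α : Type*} [PartialOrder α] [LocallyFiniteOrder α]
    {a b : α} (h : a ≤ b) : (hasse α).Reachable a b := by
  rw [reachable_iff_reflTransGen]
  exact Relation.ReflTransGen.mono (fun _ _ => Or.inl) _ _ (le_iff_reflTransGen_covBy.mp h)

theorem hasse_le_ciGraph (V : Type*) [PartialOrder V] : hasse V ≤ ciGraph V :=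
  fun _ _ h => h.elim Or.inl (Or.inr ∘ Or.inl)

theorem ciGraph_preconnected (V : Type*) [PartialOrder V] [LocallyFiniteOrder V] :
    (ciGraph V).Preconnected := by
  intro u v
  by_cases huv : u ≤ v
  · exact (hasse_reachable_of_le huv).mono (hasse_le_ciGraph V)
  by_cases hvu : v ≤ u
  · exact ((hasse_reachable_of_le hvu).mono (hasse_le_ciGraph V)).symm
  · exact Adj.reachable (Or.inr (Or.inr ⟨huv, hvu⟩))

/-- The cover-incomparability graph of a finite nonempty poset is connected. -/
theorem ciGraph_connected (V : Type*) [PartialOrder V] [Finite V] [Nonempty V] :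
    (ciGraph V).Connected := by
  have := Fintype.ofFinite V
  classical
  have := Fintype.toLocallyFiniteOrder (α := V)
  exact ⟨ciGraph_preconnected V⟩
end

section
/- Let P be a finite poset and let G_P be its cover-incomparability graph. Then G_P contains no induced cycle of length greater than 4. -/
/-!
Non-adjacent vertices of a C-I graph are strictly comparable, while adjacent ones have no element
strictly between them. Let `v 0, …, v (n - 1)` be an induced cycle with `n ≥ 5`; passing to the dual
order if necessary, `v 0 < v 2`. Walking along `v 2, …, v (n - 2)`, none of which is adjacent to
`v 0`, gives `v 0 < v (n - 2)`. Then `v (n - 1) < v 2` (else `v 2` lies between `v 0` and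
`v (n - 1)`), hence `v (n - 1) < v 1` (else `v (n - 1)` lies between `v 1` and `v 2`), and
`v 1 < v (n - 2)` (else `v (n - 2)` lies between `v 0` and `v 1`). So `v 1` lies strictly between
the adjacent vertices `v (n - 1)` and `v (n - 2)`.
-/

open SimpleGraph

theorem cycleGraph_adj_mk {n a b : ℕ} (ha : a < n) (hb : b < n) (hab : a < b) :
    (cycleGraph n).Adj ⟨a, ha⟩ ⟨b, hb⟩ ↔ b = a + 1 ∨ (a = 0 ∧ b = n - 1) := by
  rw [cycleGraph_adj', Fin.sub_def, Fin.sub_def]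
  dsimp only
  rw [Nat.mod_eq_of_lt (by omega), show n - a + b = b - a + n by omega, Nat.add_mod_right,
    Nat.mod_eq_of_lt (by omega)]
  omega

def ciGraphOrderDualIso (V : Type*) [PartialOrder V] : ciGraph V ≃g ciGraph Vᵒᵈ where
  toEquiv := OrderDual.toDual
  map_rel_iff' {a b} := by
    change (_ ⋖ _ ∨ _ ⋖ _ ∨ _) ↔ (_ ⋖ _ ∨ _ ⋖ _ ∨ _)
    rw [toDual_covBy_toDual_iff, toDual_covBy_toDual_iff, OrderDual.toDual_le_toDual,
      OrderDual.toDual_le_toDual]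
    tauto

section InducedCycle

variable {W W' : Type*} {G : SimpleGraph W} {n : ℕ} {v : ℕ → W}

/-- Values of `v` at indices `≥ n` play no role; indexing by `ℕ` rather than `Fin n` keeps the
index arithmetic in `ℕ`. -/
def IsInducedCycle (G : SimpleGraph W) (n : ℕ) (v : ℕ → W) : Prop :=
  ∀ i j, i < j → j < n → v i ≠ v j ∧ (G.Adj (v i) (v j) ↔ j = i + 1 ∨ (i = 0 ∧ j = n - 1))

theorem isInducedCycle_cycleGraph (hn : 0 < n) :
    IsInducedCycle (cycleGraph n) n fun i ↦ ⟨i % n, Nat.mod_lt i hn⟩ := by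
  intro i j hij hjn
  simp only [Nat.mod_eq_of_lt (hij.trans hjn), Nat.mod_eq_of_lt hjn]
  exact ⟨Fin.ne_of_val_ne hij.ne, cycleGraph_adj_mk _ _ hij⟩

theorem IsInducedCycle.map {H : SimpleGraph W'} (hv : IsInducedCycle G n v) (φ : G ↪g H) :
    IsInducedCycle H n (φ ∘ v) := by
  intro i j hij hjn
  simpa only [Function.comp_apply, ne_eq, φ.injective.eq_iff, φ.map_adj_iff] using hv i j hij hjn

theorem IsInducedCycle.adj_succ (hv : IsInducedCycle G n v) {i : ℕ} (hi : i + 1 < n) :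
    G.Adj (v i) (v (i + 1)) :=
  ((hv i (i + 1) (by omega) hi).2).2 (Or.inl rfl)

theorem IsInducedCycle.adj_last (hv : IsInducedCycle G n v) (hn : 1 < n) :
    G.Adj (v 0) (v (n - 1)) :=
  ((hv 0 (n - 1) (by omega) (by omega)).2).2 (Or.inr ⟨rfl, rfl⟩)

theorem IsInducedCycle.not_adj (hv : IsInducedCycle G n v) {i j : ℕ} (hij : i + 1 < j)
    (hjn : j < n) (hij' : i = 0 → j < n - 1) : ¬ G.Adj (v i) (v j) := by
  rw [(hv i j (by omega) hjn).2]
  omega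

end InducedCycle

section CIGraph

variable {V : Type*} [PartialOrder V] {a b c : V} {n : ℕ} {v : ℕ → V}

theorem ciGraph_lt_or_gt_of_not_adj (h : ¬ (ciGraph V).Adj a b) (hne : a ≠ b) :
    a < b ∨ b < a := by
  by_contra! hc
  exact h (Or.inr (Or.inr ⟨fun hab ↦ hc.1 (hab.lt_of_ne hne),
    fun hba ↦ hc.2 (hba.lt_of_ne hne.symm)⟩))

theorem ciGraph_not_adj_of_lt_of_lt (hac : a < c) (hcb : c < b) : ¬ (ciGraph V).Adj a b := by
  rintro (h | h | h)
  · exact h.2 hac hcb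
  · exact (hac.trans hcb).asymm h.lt
  · exact h.1 (hac.trans hcb).le

theorem IsInducedCycle.lt_or_gt_ciGraph (hv : IsInducedCycle (ciGraph V) n v)
    {i j : ℕ} (hij : i + 1 < j) (hjn : j < n) (hij' : i = 0 → j < n - 1) :
    v i < v j ∨ v j < v i :=
  ciGraph_lt_or_gt_of_not_adj (hv.not_adj hij hjn hij') (hv i j (by omega) hjn).1

theorem IsInducedCycle.not_lt_of_ciGraph (hv : IsInducedCycle (ciGraph V) n v)
    (hn : 4 < n) : ¬ v 0 < v 2 := by
  intro h02
  have h0k : ∀ k, 2 ≤ k → k ≤ n - 2 → v 0 < v k := by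
    intro k hk
    induction k, hk using Nat.le_induction with
    | base => exact fun _ ↦ h02
    | succ k hk ih =>
      exact fun hkn ↦ (hv.lt_or_gt_ciGraph (by omega) (by omega) (by omega)).resolve_right
        fun h ↦ ciGraph_not_adj_of_lt_of_lt h (ih (by omega)) (hv.adj_succ (by omega)).symm
  have h_last_two : v (n - 1) < v 2 :=
    (hv.lt_or_gt_ciGraph (by omega) (by omega) (by omega)).resolve_left
      fun h ↦ ciGraph_not_adj_of_lt_of_lt h02 h (hv.adj_last (by omega))
  have h_last_one : v (n - 1) < v 1 :=
    (hv.lt_or_gt_ciGraph (by omega) (by omega) (by omega)).resolve_left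
      fun h ↦ ciGraph_not_adj_of_lt_of_lt h h_last_two (hv.adj_succ (by omega))
  have h_one_pen : v 1 < v (n - 2) :=
    (hv.lt_or_gt_ciGraph (by omega) (by omega) (by omega)).resolve_right
      fun h ↦ ciGraph_not_adj_of_lt_of_lt (h0k (n - 2) (by omega) le_rfl) h
        (hv.adj_succ (by omega))
  have h_pen_last : (ciGraph V).Adj (v (n - 2)) (v (n - 1)) := by
    simpa only [show n - 2 + 1 = n - 1 by omega] using hv.adj_succ (i := n - 2) (by omega)
  exact ciGraph_not_adj_of_lt_of_lt h_last_one h_one_pen h_pen_last.symm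

end CIGraph

theorem ciGraph_no_long_induced_cycle_general (V : Type*) [PartialOrder V]
    (n : ℕ) (hn : 4 < n) : IsEmpty (cycleGraph n ↪g ciGraph V) := by
  refine ⟨fun f ↦ ?_⟩
  have hv := (isInducedCycle_cycleGraph (by omega)).map f
  rcases hv.lt_or_gt_ciGraph (i := 0) (j := 2) (by omega) (by omega) (by omega) with h02 | h20
  · exact hv.not_lt_of_ciGraph hn h02
  · exact (hv.map (ciGraphOrderDualIso V).toEmbedding).not_lt_of_ciGraph hn h20

/-- The C-I graph of a finite poset contains no induced cycle of length
greater than 4. -/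
theorem ciGraph_no_long_induced_cycle (V : Type*) [PartialOrder V] [Finite V]
    (n : ℕ) (hn : 4 < n) : IsEmpty (cycleGraph n ↪g ciGraph V) :=
  ciGraph_no_long_induced_cycle_general V n hn
end

section
/- If G is a C-I graph, then G does not contain three pairwise non-adjacent simplicial vertices. -/
open SimpleGraph

/-! In the C-I graph of a poset, two distinct non-adjacent vertices are comparable, so three
pairwise non-adjacent vertices form a chain `x < y < z`. When intervals have covers at both ends
(as in a finite poset), the middle vertex `y` has a lower cover `y' ⋖ y` and an upper cover
`y ⋖ y''`, both adjacent to `y`; but `y' < y''` is not a cover, so `y'` and `y''` are not adjacent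
and `y` is not simplicial. -/

namespace IsSimplicialVertex

variable {V W : Type*} {G : SimpleGraph V} {H : SimpleGraph W} {v : V}

lemma iso (hv : IsSimplicialVertex G v) (e : G ≃g H) : IsSimplicialVertex H (e v) := by
  intro x hx y hy hxy
  have hx' : G.Adj v (e.symm x) := by simpa using e.symm.map_adj_iff.mpr hx
  have hy' : G.Adj v (e.symm y) := by simpa using e.symm.map_adj_iff.mpr hy
  simpa using e.map_adj_iff.mpr (hv hx' hy' (e.symm.injective.ne hxy))

end IsSimplicialVertex

namespace ciGraph

variable {V : Type*} [PartialOrder V]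

lemma lt_or_gt_of_not_adj {u v : V} (hne : u ≠ v) (h : ¬ (ciGraph V).Adj u v) :
    u < v ∨ v < u := by
  simp only [ciGraph, not_or, not_and_or, not_not] at h
  rcases h.2.2 with huv | hvu
  · exact Or.inl (huv.lt_of_ne hne)
  · exact Or.inr (hvu.lt_of_ne hne.symm)

lemma not_isSimplicialVertex_of_lt_of_lt [IsStronglyAtomic V] [IsStronglyCoatomic V]
    {x y z : V} (hxy : x < y) (hyz : y < z) : ¬ IsSimplicialVertex (ciGraph V) y := by
  intro hy
  obtain ⟨y', -, hy'⟩ := exists_le_covBy_of_lt hxy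
  obtain ⟨y'', hy'', -⟩ := exists_covBy_le_of_lt hyz
  have hlt : y' < y'' := hy'.lt.trans hy''.lt
  rcases hy (Or.inr (Or.inl hy')) (Or.inl hy'') hlt.ne with h | h | h
  · exact h.2 hy'.lt hy''.lt
  · exact h.lt.not_gt hlt
  · exact h.1 hlt.le

theorem not_exists_three_indep_simplicial [IsStronglyAtomic V] [IsStronglyCoatomic V] :
    ¬ ∃ a b c : V, a ≠ b ∧ a ≠ c ∧ b ≠ c ∧
      ¬ (ciGraph V).Adj a b ∧ ¬ (ciGraph V).Adj a c ∧ ¬ (ciGraph V).Adj b c ∧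
      IsSimplicialVertex (ciGraph V) a ∧ IsSimplicialVertex (ciGraph V) b ∧
      IsSimplicialVertex (ciGraph V) c := by
  rintro ⟨a, b, c, hab, hac, hbc, nab, nac, nbc, sa, sb, sc⟩
  rcases lt_or_gt_of_not_adj hab nab with hab | hba
  · rcases lt_or_gt_of_not_adj hbc nbc with hbc | hcb
    · exact not_isSimplicialVertex_of_lt_of_lt hab hbc sb
    · rcases lt_or_gt_of_not_adj hac nac with hac | hca
      · exact not_isSimplicialVertex_of_lt_of_lt hac hcb sc
      · exact not_isSimplicialVertex_of_lt_of_lt hca hab sa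
  · rcases lt_or_gt_of_not_adj hbc nbc with hbc | hcb
    · rcases lt_or_gt_of_not_adj hac nac with hac | hca
      · exact not_isSimplicialVertex_of_lt_of_lt hba hac sa
      · exact not_isSimplicialVertex_of_lt_of_lt hbc hca sc
    · exact not_isSimplicialVertex_of_lt_of_lt hcb hba sb

end ciGraph

/-- A C-I graph does not contain three pairwise non-adjacent simplicial
vertices. -/
theorem ciGraph_no_three_indep_simplicial {W : Type u} (G : SimpleGraph W)
    (hG : IsCIGraph G) :
    ¬ ∃ a b c : W, a ≠ b ∧ a ≠ c ∧ b ≠ c ∧ ¬ G.Adj a b ∧ ¬ G.Adj a c ∧ ¬ G.Adj b c ∧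
      IsSimplicialVertex G a ∧ IsSimplicialVertex G b ∧ IsSimplicialVertex G c := by
  obtain ⟨V, _, _, ⟨e⟩⟩ := hG
  rintro ⟨a, b, c, hab, hac, hbc, nab, nac, nbc, sa, sb, sc⟩
  exact ciGraph.not_exists_three_indep_simplicial ⟨e a, e b, e c,
    e.injective.ne hab, e.injective.ne hac, e.injective.ne hbc,
    mt e.map_adj_iff.mp nab, mt e.map_adj_iff.mp nac, mt e.map_adj_iff.mp nbc,
    sa.iso e, sb.iso e, sc.iso e⟩
end

section
/- Let P be a finite poset and let G_P be its cover-incomparability graph. If v is a simplicial vertex of G_P, then v is a maximal element or a minimal element of P. -/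
open SimpleGraph

namespace ciGraph

variable {V : Type*} [PartialOrder V]

theorem adj_of_covBy {a b : V} (h : a ⋖ b) : (ciGraph V).Adj a b := Or.inl h

theorem not_adj_of_lt_of_lt {a b c : V} (hab : a < b) (hbc : b < c) : ¬ (ciGraph V).Adj a c := by
  rintro (hac | hca | ⟨hac, -⟩)
  · exact hac.2 hab hbc
  · exact (hab.trans hbc).not_gt hca.lt
  · exact hac (hab.trans hbc).le

/-- Otherwise `v` has a lower cover and an upper cover, both neighbours of `v`, which are
comparable without one covering the other. -/
theorem isMax_or_isMin_of_isSimplicialVertex [IsStronglyAtomic V] [IsStronglyCoatomic V] {v : V}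
    (hv : IsSimplicialVertex (ciGraph V) v) : IsMax v ∨ IsMin v := by
  by_contra! ⟨hmax, hmin⟩
  obtain ⟨c, hvc⟩ := not_isMax_iff.mp hmax
  obtain ⟨a, hav⟩ := not_isMin_iff.mp hmin
  obtain ⟨c', hvc', -⟩ := exists_covBy_le_of_lt hvc
  obtain ⟨a', -, ha'v⟩ := exists_le_covBy_of_lt hav
  have hadj_a' : a' ∈ (ciGraph V).neighborSet v := (adj_of_covBy ha'v).symm
  have hadj_c' : c' ∈ (ciGraph V).neighborSet v := adj_of_covBy hvc'
  exact not_adj_of_lt_of_lt ha'v.lt hvc'.lt <|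
    hv hadj_a' hadj_c' (ha'v.lt.trans hvc'.lt).ne

end ciGraph

/-- A simplicial vertex of the C-I graph of a finite poset is a maximal
or a minimal element of the poset. -/
theorem simplicial_isMax_or_isMin (V : Type*) [PartialOrder V] [Finite V] (v : V)
    (hv : IsSimplicialVertex (ciGraph V) v) : IsMax v ∨ IsMin v :=
  ciGraph.isMax_or_isMin_of_isSimplicialVertex hv
end

section
/- Let G = (V, E) be the C-I graph of a finite poset P and let v ∈ V be a minimal or maximal element of P. Then the induced subgraph G \ v obtained by deleting v from G is also a C-I graph. -/
open SimpleGraph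

theorem IsMin.isLowerSet_singleton {V : Type*} [PartialOrder V] {v : V} (hv : IsMin v) :
    IsLowerSet ({v} : Set V) := by
  rintro a b hba rfl
  exact hv.eq_of_le hba

theorem IsMax.isUpperSet_singleton {V : Type*} [PartialOrder V] {v : V} (hv : IsMax v) :
    IsUpperSet ({v} : Set V) := by
  rintro a b hab rfl
  exact hv.eq_of_ge hab

theorem ordConnected_compl_singleton_of_isMin_or_isMax {V : Type*} [PartialOrder V] {v : V}
    (hv : IsMin v ∨ IsMax v) : ({v}ᶜ : Set V).OrdConnected := by
  rcases hv with hmin | hmax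
  · exact (isUpperSet_compl.2 hmin.isLowerSet_singleton).ordConnected
  · exact (isLowerSet_compl.2 hmax.isUpperSet_singleton).ordConnected

/-- Restricting to an order-connected set creates no new covering pairs. -/
theorem ciGraph_induce_of_ordConnected {V : Type*} [PartialOrder V] {s : Set V}
    (hs : s.OrdConnected) : (ciGraph V).induce s = ciGraph s := by
  have hcov (a b : s) : (a : V) ⋖ b ↔ a ⋖ b :=
    Set.OrdConnected.apply_covBy_apply_iff (OrderEmbedding.subtype (· ∈ s))
      (by simpa using hs)
  ext a b
  simp only [comap_adj, Function.Embedding.coe_subtype]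
  change _ ∨ _ ∨ _ ↔ _ ∨ _ ∨ _
  rw [hcov, hcov, Subtype.coe_le_coe, Subtype.coe_le_coe]

theorem isCIGraph_ciGraph (V : Type*) [PartialOrder V] [Finite V] : IsCIGraph (ciGraph V) :=
  ⟨V, inferInstance, inferInstance, ⟨Iso.refl⟩⟩

/-- Deleting a minimal or maximal element of the poset from its C-I graph
again yields a C-I graph. -/
theorem ciGraph_delete_extremal (V : Type*) [PartialOrder V] [Finite V] (v : V)
    (hv : IsMin v ∨ IsMax v) :
    IsCIGraph ((ciGraph V).induce {v}ᶜ) := by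
  rw [ciGraph_induce_of_ordConnected (ordConnected_compl_singleton_of_isMin_or_isMax hv)]
  exact isCIGraph_ciGraph _
end

section
/- Let G be a chordal C-I graph and v a simplicial vertex of G. If G has exactly two independent simplicial vertices, then either G \ v is a chordal C-I graph having exactly two independent simplicial vertices, or G \ v is a complete graph. -/
open SimpleGraph

/-!
In a chordal C-I graph, a maximal element `y` of least degree among the maximal elements is
simplicial. Otherwise take non-adjacent neighbours `a < b` of `y` and a maximal `z ≥ b`: every
neighbour `w ≠ y` of `z` is a neighbour of `y` (else `w < y`, and either `z y a w` is an induced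
4-cycle or `w` is comparable to `a`, which forces a non-cover between `w` and `z` or `a` and `y`),
while `a` is a neighbour of `y` but not of `z`; so `z` has smaller degree.

Deleting a simplicial element of a poset creates no new covers, so deleting a simplicial vertex
keeps a chordal C-I graph chordal C-I, and induction shows that every non-complete one has two
non-adjacent simplicial vertices. Independent simplicial vertices of `G \ v` lift to independent
simplicial vertices of `G` by replacing the (at most one) neighbour of `v` among them by `v`.
-/

section Graph

variable {V W : Type*} {G : SimpleGraph V} {H : SimpleGraph W}

lemma IsChordal.of_embedding (hH : IsChordal H) (f : G ↪g H) : IsChordal G :=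
  fun n hn => ⟨fun g => (hH n hn).false (f.comp g)⟩

lemma IsChordal.induce (hG : IsChordal G) (s : Set V) : IsChordal (G.induce s) :=
  hG.of_embedding (Embedding.induce s)

lemma IsChordal.adj_or_adj_of_cycle_four (hG : IsChordal G) {a b c d : V}
    (hab : G.Adj a b) (hbc : G.Adj b c) (hcd : G.Adj c d) (hda : G.Adj d a)
    (hac : a ≠ c) (hbd : b ≠ d) : G.Adj a c ∨ G.Adj b d := by
  by_contra! h
  obtain ⟨hnac, hnbd⟩ := h
  refine (hG 4 (by norm_num)).false ⟨⟨![a, b, c, d], fun i j hij => ?_⟩, @fun i j => ?_⟩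
  · fin_cases i <;> fin_cases j <;>
      simp_all [hab.ne, hbc.ne, hcd.ne, hda.ne, hab.ne', hbc.ne', hcd.ne', hda.ne']
  · change G.Adj (![a, b, c, d] i) (![a, b, c, d] j) ↔ _
    fin_cases i <;> fin_cases j <;>
      simp [cycleGraph_adj, hab, hbc, hcd, hda, hnac, hnbd, hab.symm, hbc.symm, hcd.symm,
        hda.symm, G.adj_comm c a, G.adj_comm d b] <;> decide

lemma IsSimplicialVertex.map (e : G ≃g H) {x : V} (hx : IsSimplicialVertex G x) :
    IsSimplicialVertex H (e x) := by
  intro s hs t ht hst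
  have hs' : G.Adj x (e.symm s) := by simpa using e.symm.map_adj_iff.mpr hs
  have ht' : G.Adj x (e.symm t) := by simpa using e.symm.map_adj_iff.mpr ht
  simpa using e.map_adj_iff.mpr (hx hs' ht' (e.symm.injective.ne hst))

lemma IsSimplicialVertex.of_induce_compl {v : V} {x : ({v}ᶜ : Set V)} (hvx : ¬ G.Adj v x)
    (hx : IsSimplicialVertex (G.induce {v}ᶜ) x) : IsSimplicialVertex G x := by
  intro s hs t ht hst
  have hsv : s ≠ v := by rintro rfl; exact hvx (G.adj_symm hs)
  have htv : t ≠ v := by rintro rfl; exact hvx (G.adj_symm ht)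
  exact @hx ⟨s, hsv⟩ hs ⟨t, htv⟩ ht fun h => hst (congrArg Subtype.val h)

lemma IsCompleteGraph.isSimplicialVertex (hG : IsCompleteGraph G) (x : V) :
    IsSimplicialVertex G x :=
  fun s _ t _ hst => hG s t hst

lemma ncard_neighborSet_lt_of_diff_subset [Finite V] {y z a : V} (hyz : G.Adj y z)
    (hya : G.Adj y a) (hza : ¬ G.Adj z a) (haz : a ≠ z)
    (hsub : G.neighborSet z \ {y} ⊆ G.neighborSet y) :
    (G.neighborSet z).ncard < (G.neighborSet y).ncard := by
  have ha : a ∉ G.neighborSet z \ {y} := fun h => hza h.1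
  have hz : z ∉ insert a (G.neighborSet z \ {y}) := by
    rintro (h | h)
    · exact haz h.symm
    · exact G.loopless.irrefl z h.1
  calc (G.neighborSet z).ncard
      = (insert a (G.neighborSet z \ {y})).ncard := by
        rw [Set.ncard_insert_of_notMem ha]
        exact (Set.ncard_sdiff_singleton_add_one (G.adj_symm hyz)).symm
    _ < (G.neighborSet y).ncard :=
        Set.ncard_lt_ncard ((Set.ssubset_iff_of_subset (Set.insert_subset hya hsub)).mpr
          ⟨z, hyz, hz⟩)

def SimpleGraph.Iso.induceOfMem (e : G ≃g H) {s : Set V} {t : Set W}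
    (h : ∀ x, x ∈ s ↔ e x ∈ t) :
    G.induce s ≃g H.induce t where
  toEquiv := e.toEquiv.subtypeEquiv h
  map_rel_iff' := e.map_adj_iff

end Graph

section Collapse

variable {V : Type*} {G : SimpleGraph V} {v : V}

open Classical in
noncomputable def collapseNeighbors (G : SimpleGraph V) (v : V) (x : ({v}ᶜ : Set V)) : V :=
  if G.Adj v x then v else x

lemma isSimplicialVertex_collapseNeighbors (hv : IsSimplicialVertex G v) {x : ({v}ᶜ : Set V)}
    (hx : IsSimplicialVertex (G.induce {v}ᶜ) x) :
    IsSimplicialVertex G (collapseNeighbors G v x) := by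
  unfold collapseNeighbors
  split_ifs with hvx
  · exact hv
  · exact hx.of_induce_compl hvx

lemma collapseNeighbors_ne_and_not_adj (hv : IsSimplicialVertex G v) {x y : ({v}ᶜ : Set V)}
    (hxy : x ≠ y) (hnxy : ¬ (G.induce {v}ᶜ).Adj x y) :
    collapseNeighbors G v x ≠ collapseNeighbors G v y ∧
      ¬ G.Adj (collapseNeighbors G v x) (collapseNeighbors G v y) := by
  have hxy' : (x : V) ≠ y := Subtype.val_injective.ne hxy
  unfold collapseNeighbors
  split_ifs with hvx hvy hvy
  · exact absurd (hv hvx hvy hxy') hnxy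
  · exact ⟨fun h => y.2 h.symm, hvy⟩
  · exact ⟨x.2, fun h => hvx (G.adj_symm h)⟩
  · exact ⟨hxy', hnxy⟩

end Collapse

section CIGraph

variable {P : Type*} [PartialOrder P] {a b c y z : P}

lemma ciGraph_adj : (ciGraph P).Adj a b ↔ a ⋖ b ∨ b ⋖ a ∨ (¬ a ≤ b ∧ ¬ b ≤ a) :=
  Iff.rfl

lemma lt_or_gt_of_not_ciGraph_adj (hab : a ≠ b) (h : ¬ (ciGraph P).Adj a b) :
    a < b ∨ b < a := by
  simp only [ciGraph_adj, not_or, not_and_or, not_not] at h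
  rcases h.2.2 with h | h
  exacts [.inl (h.lt_of_ne hab), .inr (h.lt_of_ne hab.symm)]

lemma covBy_of_ciGraph_adj (hab : a < b) (h : (ciGraph P).Adj a b) : a ⋖ b := by
  rcases h with h | h | h
  exacts [h, absurd h.lt hab.not_gt, absurd hab.le h.1]

lemma not_ciGraph_adj_of_lt_of_lt (hab : a < b) (hbc : b < c) : ¬ (ciGraph P).Adj a c :=
  fun h => (covBy_of_ciGraph_adj (hab.trans hbc) h).2 hab hbc

lemma ciGraph_adj_of_isMax (hy : IsMax y) (hz : IsMax z) (hyz : y ≠ z) :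
    (ciGraph P).Adj y z :=
  .inr (.inr ⟨fun h => hyz (hy.eq_of_le h), fun h => hyz (hz.eq_of_le h).symm⟩)

lemma ciGraph_neighborSet_diff_subset (hch : IsChordal (ciGraph P)) (hy : IsMax y)
    (hz : IsMax z) (hyz : y ≠ z) (hya : (ciGraph P).Adj y a) (hza : ¬ (ciGraph P).Adj z a)
    (haz : a < z) :
    (ciGraph P).neighborSet z \ {y} ⊆ (ciGraph P).neighborSet y := by
  rintro w ⟨hzw, hwy : w ≠ y⟩
  by_contra hyw
  have hwy_lt : w < y := by
    rcases lt_or_gt_of_not_ciGraph_adj hwy (fun h => hyw h.symm) with h | h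
    exacts [h, absurd (hy h.le) h.not_ge]
  have hnaw : ¬ (ciGraph P).Adj a w := fun haw =>
    ((hch.adj_or_adj_of_cycle_four (ciGraph_adj_of_isMax hz hy hyz.symm) hya haw
      ((ciGraph P).adj_symm hzw) haz.ne' hwy.symm).elim hza hyw)
  have hwa : w ≠ a := by rintro rfl; exact hza hzw
  rcases lt_or_gt_of_not_ciGraph_adj hwa (fun h => hnaw h.symm) with h | h
  · exact not_ciGraph_adj_of_lt_of_lt h haz ((ciGraph P).adj_symm hzw)
  · exact not_ciGraph_adj_of_lt_of_lt h hwy_lt ((ciGraph P).adj_symm hya)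

lemma exists_isMax_ncard_neighborSet_lt [Finite P] (hch : IsChordal (ciGraph P)) (hy : IsMax y)
    (hya : (ciGraph P).Adj y a) (hyb : (ciGraph P).Adj y b) (hab : a < b)
    (hnab : ¬ (ciGraph P).Adj a b) :
    ∃ z, IsMax z ∧ ((ciGraph P).neighborSet z).ncard < ((ciGraph P).neighborSet y).ncard := by
  obtain ⟨z, hbz, hz⟩ := Finite.exists_le_maximal (p := fun _ : P => True) trivial
  rw [maximal_true] at hz
  have hby : ¬ b ≤ y := fun h =>
    not_ciGraph_adj_of_lt_of_lt hab (h.lt_of_ne ((ciGraph P).ne_of_adj hyb).symm)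
      ((ciGraph P).adj_symm hya)
  have hyz : y ≠ z := by rintro rfl; exact hby hbz
  have hza : ¬ (ciGraph P).Adj z a := by
    rcases hbz.lt_or_eq with hbz | rfl
    · exact fun h => not_ciGraph_adj_of_lt_of_lt hab hbz ((ciGraph P).adj_symm h)
    · exact fun h => hnab ((ciGraph P).adj_symm h)
  have haz : a < z := hab.trans_le hbz
  exact ⟨z, hz, ncard_neighborSet_lt_of_diff_subset (ciGraph_adj_of_isMax hy hz hyz) hya hza
    haz.ne (ciGraph_neighborSet_diff_subset hch hy hz hyz hya hza haz)⟩

theorem ciGraph_exists_isSimplicialVertex [Finite P] [Nonempty P]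
    (hch : IsChordal (ciGraph P)) : ∃ y, IsSimplicialVertex (ciGraph P) y := by
  obtain ⟨y, hy, hmin⟩ := Set.Finite.exists_minimalFor
    (fun y => ((ciGraph P).neighborSet y).ncard) {y : P | IsMax y} (Set.toFinite _)
    (let ⟨z, _, hz⟩ := Finite.exists_le_maximal (p := fun _ : P => True)
      (a := Classical.arbitrary P) trivial; ⟨z, maximal_true.mp hz⟩)
  have hadj : ∀ a b, (ciGraph P).Adj y a → (ciGraph P).Adj y b → a < b →
      (ciGraph P).Adj a b := fun a b hya hyb hab => by
    by_contra hnab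
    obtain ⟨z, hz, hlt⟩ := exists_isMax_ncard_neighborSet_lt hch hy hya hyb hab hnab
    exact (hmin hz hlt.le).not_gt hlt
  refine ⟨y, fun a ha b hb hab => ?_⟩
  by_contra hnab
  rcases lt_or_gt_of_not_ciGraph_adj hab hnab with h | h
  · exact hnab (hadj a b ha hb h)
  · exact hnab ((ciGraph P).adj_symm (hadj b a hb ha h))

lemma coe_covBy_coe_of_isSimplicialVertex {p : P} (hp : IsSimplicialVertex (ciGraph P) p)
    {a b : ({p}ᶜ : Set P)} : (a : P) ⋖ b ↔ a ⋖ b := by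
  refine ⟨fun h => h.of_image (OrderEmbedding.subtype (· ∈ ({p}ᶜ : Set P))), fun h => ?_⟩
  have hab : (a : P) < b := h.lt
  by_contra hncov
  -- the only element strictly between `a` and `b` is `p`, so `a ⋖ p ⋖ b`
  have hbetween : ∀ c : P, (a : P) < c → c < b → c = p := fun c hac hcb => by
    by_contra hcp
    exact h.2 (c := ⟨c, hcp⟩) hac hcb
  obtain ⟨c, hac, hcb⟩ := (not_covBy_iff hab).mp hncov
  obtain rfl := hbetween c hac hcb
  have hpa : (ciGraph P).Adj c a :=
    .inr (.inl ⟨hac, fun d had hdc => hdc.ne (hbetween d had (hdc.trans hcb))⟩)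
  have hpb : (ciGraph P).Adj c b :=
    .inl ⟨hcb, fun d hcd hdb => hcd.ne' (hbetween d (hac.trans hcd) hdb)⟩
  exact hncov (covBy_of_ciGraph_adj hab (hp hpa hpb hab.ne))

lemma ciGraph_induce_compl {p : P} (hp : IsSimplicialVertex (ciGraph P) p) :
    (ciGraph P).induce {p}ᶜ = ciGraph ({p}ᶜ : Set P) := by
  ext a b
  simp only [comap_adj, Function.Embedding.subtype_apply, ciGraph_adj,
    coe_covBy_coe_of_isSimplicialVertex hp, Subtype.coe_le_coe]

end CIGraph

namespace IsCIGraph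

variable {V : Type u} {G : SimpleGraph V}

lemma finite (hCI : IsCIGraph G) : Finite V :=
  let ⟨_, _, _, ⟨e⟩⟩ := hCI; .of_equiv _ e.toEquiv.symm

lemma exists_isSimplicialVertex [Nonempty V] (hCI : IsCIGraph G) (hG : IsChordal G) :
    ∃ y, IsSimplicialVertex G y := by
  obtain ⟨P, _, _, ⟨e⟩⟩ := hCI
  have : Nonempty P := ⟨e (Classical.arbitrary V)⟩
  obtain ⟨y, hy⟩ := ciGraph_exists_isSimplicialVertex (hG.of_embedding e.symm.toEmbedding)
  exact ⟨e.symm y, hy.map e.symm⟩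

lemma induce_compl (hCI : IsCIGraph G) {v : V} (hv : IsSimplicialVertex G v) :
    IsCIGraph (G.induce {v}ᶜ) := by
  obtain ⟨P, _, _, ⟨e⟩⟩ := hCI
  refine ⟨({e v}ᶜ : Set P), inferInstance, inferInstance, ?_⟩
  rw [← ciGraph_induce_compl (hv.map e)]
  exact ⟨e.induceOfMem fun x => e.injective.ne_iff.symm⟩

theorem exists_nonadj_simplicial_pair (hCI : IsCIGraph G) (hG : IsChordal G)
    (hnc : ¬ IsCompleteGraph G) :
    ∃ a b, a ≠ b ∧ ¬ G.Adj a b ∧ IsSimplicialVertex G a ∧ IsSimplicialVertex G b := by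
  induction hn : Nat.card V using Nat.strong_induction_on generalizing V with
  | _ n ih =>
    have := hCI.finite
    obtain ⟨u, w, huw, hnuw⟩ : ∃ u w, u ≠ w ∧ ¬ G.Adj u w := by
      simpa [IsCompleteGraph] using hnc
    have : Nonempty V := ⟨u⟩
    obtain ⟨y, hy⟩ := hCI.exists_isSimplicialVertex hG
    by_cases hc : IsCompleteGraph (G.induce {y}ᶜ)
    · obtain ⟨x, hxy, hyx⟩ : ∃ x, x ≠ y ∧ ¬ G.Adj y x := by
        by_cases huy : u = y
        · exact ⟨w, fun h => huw (huy.trans h.symm), huy ▸ hnuw⟩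
        by_cases hwy : w = y
        · exact ⟨u, huy, hwy ▸ fun h => hnuw (G.adj_symm h)⟩
        exact absurd (hc ⟨u, huy⟩ ⟨w, hwy⟩ fun h => huw (congrArg Subtype.val h)) hnuw
      exact ⟨y, x, hxy.symm, hyx, hy,
        (hc.isSimplicialVertex ⟨x, hxy⟩).of_induce_compl hyx⟩
    · have hcard : Nat.card ({y}ᶜ : Set V) < n := hn ▸ Finite.card_subtype_lt (not_not.mpr rfl)
      obtain ⟨a, b, hab, hnab, ha, hb⟩ :=
        ih _ hcard (hCI.induce_compl hy) (hG.induce _) hc rfl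
      obtain ⟨hab', hnab'⟩ := collapseNeighbors_ne_and_not_adj hy hab hnab
      exact ⟨_, _, hab', hnab', isSimplicialVertex_collapseNeighbors hy ha,
        isSimplicialVertex_collapseNeighbors hy hb⟩

end IsCIGraph

/-- If a chordal C-I graph `G` has exactly two independent simplicial
vertices and `v` is a simplicial vertex, then `G \ v` is a chordal C-I graph with
exactly two independent simplicial vertices, or `G \ v` is complete. -/
theorem chordal_CI_two_simplicial_delete {V : Type u} (G : SimpleGraph V)
    (hG : IsChordal G) (hCI : IsCIGraph G) (v : V) (hv : IsSimplicialVertex G v)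
    (h2 : HasExactlyTwoIndepSimplicial G) :
    (IsChordal (G.induce {v}ᶜ) ∧ IsCIGraph (G.induce {v}ᶜ) ∧
      HasExactlyTwoIndepSimplicial (G.induce {v}ᶜ)) ∨
      IsCompleteGraph (G.induce {v}ᶜ) := by
  by_cases hc : IsCompleteGraph (G.induce {v}ᶜ)
  · exact .inr hc
  have hG' := hG.induce {v}ᶜ
  have hCI' := hCI.induce_compl hv
  refine .inl ⟨hG', hCI', hCI'.exists_nonadj_simplicial_pair hG' hc, ?_⟩
  rintro ⟨x, y, z, hxy, hxz, hyz, hnxy, hnxz, hnyz, hx, hy, hz⟩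
  obtain ⟨hxy', hnxy'⟩ := collapseNeighbors_ne_and_not_adj hv hxy hnxy
  obtain ⟨hxz', hnxz'⟩ := collapseNeighbors_ne_and_not_adj hv hxz hnxz
  obtain ⟨hyz', hnyz'⟩ := collapseNeighbors_ne_and_not_adj hv hyz hnyz
  exact h2.2 ⟨_, _, _, hxy', hxz', hyz', hnxy', hnxz', hnyz',
    isSimplicialVertex_collapseNeighbors hv hx, isSimplicialVertex_collapseNeighbors hv hy,
    isSimplicialVertex_collapseNeighbors hv hz⟩
end

section
/- Let G be a finite chordal graph and (T, structure) a clique tree of G, i.e., T is a tree whose nodes are the maximal cliques of G and, for every vertex v of G, the set of maximal cliques containing v induces a connected subgraph (subtree) of T. Then every leaf node of T, viewed as a maximal clique of G, contains a simplicial vertex of G. -/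
open SimpleGraph

/-! A vertex `v` of the leaf `C` that is not in its unique neighbour `D` lies in no other
maximal clique: the subtree of cliques containing `v` is connected, so if it had a node
besides `C`, a path inside it would reach `C` through a neighbour of `C`, i.e. through `D`.
Hence every neighbour of `v`, lying in a maximal clique together with `v`, lies in `C`. -/

lemma isMaxClique_iff_maximal {V : Type*} {G : SimpleGraph V} {s : Set V} :
    IsMaxClique G s ↔ Maximal G.IsClique s :=
  and_congr_right fun _ ↦ forall₃_congr fun _ _ hst ↦
    ⟨fun h ↦ (h ▸ subset_rfl), fun h ↦ subset_antisymm h hst⟩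

lemma SimpleGraph.IsClique.exists_isMaxClique_superset {V : Type*} [Finite V] {G : SimpleGraph V}
    {s : Set V} (hs : G.IsClique s) : ∃ E, IsMaxClique G E ∧ s ⊆ E := by
  obtain ⟨E, hsE, hE⟩ := Finite.exists_le_maximal hs
  exact ⟨E, isMaxClique_iff_maximal.mpr hE, hsE⟩

lemma isSimplicialVertex_of_forall_isMaxClique_eq {V : Type*} [Finite V] {G : SimpleGraph V}
    {C : Set V} {v : V} (hC : G.IsClique C) (hv : ∀ E, IsMaxClique G E → v ∈ E → E = C) :
    IsSimplicialVertex G v := by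
  refine hC.subset fun u hvu ↦ ?_
  obtain ⟨E, hE, hvuE⟩ := (isClique_pair.mpr fun _ ↦ hvu).exists_isMaxClique_superset
  exact hv E hE (hvuE (Set.mem_insert v _)) ▸ hvuE (Set.mem_insert_of_mem v rfl)

lemma IsMaxClique.exists_mem_not_mem {V : Type*} {G : SimpleGraph V} {C D : Set V}
    (hC : IsMaxClique G C) (hD : IsMaxClique G D) (hCD : C ≠ D) : ∃ v ∈ C, v ∉ D :=
  Set.not_subset.mp fun hsub ↦ hCD (hC.2 D hD.1 hsub).symm

lemma eq_of_induce_connected_of_forall_adj_not_mem {α : Type*} {T : SimpleGraph α}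
    {S : Set α} (hS : (T.induce S).Connected) {c x : α} (hc : c ∈ S) (hx : x ∈ S)
    (hnbr : ∀ y, T.Adj y c → y ∉ S) : x = c := by
  obtain ⟨w⟩ := hS.preconnected ⟨x, hx⟩ ⟨c, hc⟩
  by_contra hxc
  have hnil : ¬ w.Nil := Walk.not_nil_of_ne fun h ↦ hxc (congrArg Subtype.val h)
  exact hnbr _ (w.adj_penultimate hnil) w.penultimate.2

theorem cliqueTree_leaf_has_simplicial_general {V : Type*} [Finite V] (G : SimpleGraph V)
    (T : SimpleGraph {s : Set V // IsMaxClique G s})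
    (hsub : ∀ v : V, (T.induce {C : {s : Set V // IsMaxClique G s} | v ∈ (C : Set V)}).Connected)
    (C : {s : Set V // IsMaxClique G s}) (hleaf : ∃! D, T.Adj C D) :
    ∃ v ∈ (C : Set V), IsSimplicialVertex G v := by
  obtain ⟨D, hCD, huniq⟩ := hleaf
  obtain ⟨v, hvC, hvD⟩ :=
    C.2.exists_mem_not_mem D.2 fun h ↦ T.ne_of_adj hCD (Subtype.ext h)
  refine ⟨v, hvC, isSimplicialVertex_of_forall_isMaxClique_eq C.2.1 fun E hE hvE ↦ ?_⟩
  have hEC : (⟨E, hE⟩ : {s : Set V // IsMaxClique G s}) = C :=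
    eq_of_induce_connected_of_forall_adj_not_mem (hsub v) hvC hvE
      fun y hy hvy ↦ hvD (huniq y hy.symm ▸ hvy)
  exact congrArg Subtype.val hEC

/-- Every leaf node of a clique tree of a finite chordal graph contains a
simplicial vertex. -/
theorem cliqueTree_leaf_has_simplicial {V : Type*} [Finite V] (G : SimpleGraph V)
    (hG : IsChordal G)
    (T : SimpleGraph {s : Set V // IsMaxClique G s}) (hT : T.IsTree)
    (hsub : ∀ v : V, (T.induce {C : {s : Set V // IsMaxClique G s} | v ∈ (C : Set V)}).Connected)
    (C : {s : Set V // IsMaxClique G s}) (hleaf : ∃! D, T.Adj C D) :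
    ∃ v ∈ (C : Set V), IsSimplicialVertex G v :=
  cliqueTree_leaf_has_simplicial_general G T hsub C hleaf
end

section
/- A finite graph G is a C-I cograph (i.e., both a cograph and a C-I graph) if and only if G is the join of finitely many chordal C-I cographs, i.e., there exist graphs G_1, …, G_k, each of which is chordal, a cograph, and a C-I graph, such that G is isomorphic to G_1 ∨ G_2 ∨ ⋯ ∨ G_k (the graph on the disjoint union of the vertex sets containing all edges of each G_i together with all edges between distinct G_i and G_j). -/
/-!
The non-edges of `ciGraph P` are the pairs `a < b` that are not covers ("skips"). If `ciGraph P`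
is a cograph, `P` has no four-element chain (a chain of three covers would be an induced `P₄`),
so skips go from minimal to maximal elements, and the cograph condition makes the skip relation
difunctional: the non-edges fall into complete bipartite blocks. A block together with the
elements strictly inside its skips is order-convex, so it induces the C-I graph of the subposet;
since every bottom–top pair of a block is a non-edge it has no induced `C₄`, and being a cograph
it has no longer induced cycles either.
Elements of different blocks, and elements lying in no skip interval, are adjacent, which gives
the join. Conversely, a join of C-I graphs is the C-I graph of the disjoint sum of the posets.
-/

open SimpleGraph

/-- The join of a family of graphs: vertices from different summands are always adjacent,
vertices in the same summand are adjacent iff they are adjacent in that summand. -/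
def familyJoin {ι : Type*} {W : ι → Type*} (H : ∀ i, SimpleGraph (W i)) :
    SimpleGraph (Σ i, W i) where
  Adj x y := x.1 ≠ y.1 ∨
    ∃ (i : ι) (a b : W i), (H i).Adj a b ∧ x = ⟨i, a⟩ ∧ y = ⟨i, b⟩
  symm := by
    constructor
    rintro x y (h | ⟨i, a, b, hab, rfl, rfl⟩)
    · exact Or.inl (Ne.symm h)
    · exact Or.inr ⟨i, b, a, hab.symm, rfl, rfl⟩
  loopless := by
    constructor
    rintro x (h | ⟨i, a, b, hab, rfl, h2⟩)
    · exact h rfl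
    · have hab' : a = b := by
        have := (Sigma.mk.inj_iff.mp h2).2
        exact eq_of_heq this
      exact hab.ne hab'

universe u

section Cograph

variable {V W : Type*} {G : SimpleGraph V}

theorem IsCograph.false_of_path (hG : IsCograph G) {a b c d : V}
    (hab : G.Adj a b) (hbc : G.Adj b c) (hcd : G.Adj c d)
    (hac : ¬ G.Adj a c) (had : ¬ G.Adj a d) (hbd : ¬ G.Adj b d)
    (hac' : a ≠ c) (had' : a ≠ d) (hbd' : b ≠ d) : False :=
  hG ⟨a, b, c, d, hab.ne, hac', had', hbc.ne, hbd', hcd.ne, hab, hbc, hcd, hac, had, hbd⟩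

theorem IsCograph.of_embedding {G' : SimpleGraph W} (f : G ↪g G') (h : IsCograph G') :
    IsCograph G := by
  rintro ⟨a, b, c, d, -, hac', had', -, hbd', -, hab, hbc, hcd, hac, had, hbd⟩
  exact h.false_of_path (f.map_adj_iff.2 hab) (f.map_adj_iff.2 hbc) (f.map_adj_iff.2 hcd)
    (mt f.map_adj_iff.1 hac) (mt f.map_adj_iff.1 had) (mt f.map_adj_iff.1 hbd)
    (f.injective.ne hac') (f.injective.ne had') (f.injective.ne hbd')

theorem cycleGraph_adj_of_lt_four {n : ℕ} (hn : 4 < n) {i j : Fin n} (hi : i.val < 4)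
    (hj : j.val < 4) : (cycleGraph n).Adj i j ↔ i.val + 1 = j.val ∨ j.val + 1 = i.val := by
  rw [cycleGraph_adj']
  rcases lt_trichotomy i j with hij | rfl | hji
  · rw [Fin.coe_sub_iff_lt.2 hij, Fin.coe_sub_iff_le.2 hij.le]
    omega
  · rw [Fin.coe_sub_iff_le.2 le_rfl]
    omega
  · rw [Fin.coe_sub_iff_le.2 hji.le, Fin.coe_sub_iff_lt.2 hji]
    omega

/-- Longer induced cycles contain an induced `P₄`. -/
theorem IsCograph.isChordal (hG : IsCograph G) (hC₄ : IsEmpty (cycleGraph 4 ↪g G)) :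
    IsChordal G := by
  intro n hn
  obtain rfl | hn := (Nat.succ_le_of_lt hn).eq_or_lt
  · exact hC₄
  refine ⟨fun f => ?_⟩
  have adj : ∀ i j (hi : i < 4) (hj : j < 4),
      G.Adj (f ⟨i, by omega⟩) (f ⟨j, by omega⟩) ↔ i + 1 = j ∨ j + 1 = i :=
    fun i j hi hj => f.map_adj_iff.trans (cycleGraph_adj_of_lt_four hn hi hj)
  exact hG.false_of_path ((adj 0 1 (by omega) (by omega)).2 (by omega))
    ((adj 1 2 (by omega) (by omega)).2 (by omega)) ((adj 2 3 (by omega) (by omega)).2 (by omega))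
    (mt (adj 0 2 (by omega) (by omega)).1 (by omega))
    (mt (adj 0 3 (by omega) (by omega)).1 (by omega))
    (mt (adj 1 3 (by omega) (by omega)).1 (by omega))
    (f.injective.ne (by simp)) (f.injective.ne (by simp)) (f.injective.ne (by simp))

end Cograph

section FamilyJoin

variable {ι : Type*} {W W' : ι → Type*} {H : ∀ i, SimpleGraph (W i)}

theorem familyJoin_adj_mk {i : ι} {a b : W i} :
    (familyJoin H).Adj ⟨i, a⟩ ⟨i, b⟩ ↔ (H i).Adj a b := by
  refine ⟨?_, fun h => Or.inr ⟨i, a, b, h, rfl, rfl⟩⟩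
  rintro (h | ⟨j, a, b, h, ⟨⟩, ⟨⟩⟩)
  exacts [absurd rfl h, h]

theorem isCograph_familyJoin (h : ∀ i, IsCograph (H i)) : IsCograph (familyJoin H) := by
  rintro ⟨⟨i, a⟩, ⟨i₂, b⟩, ⟨i₃, c⟩, ⟨i₄, d⟩, -, hac', had', -, hbd', -,
    hab, hbc, hcd, hac, had, hbd⟩
  obtain rfl : i = i₃ := by_contra fun h => hac (Or.inl h)
  obtain rfl : i = i₄ := by_contra fun h => had (Or.inl h)
  obtain rfl : i = i₂ := by_contra fun h => hbd (Or.inl (Ne.symm h))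
  exact (h i).false_of_path (familyJoin_adj_mk.1 hab) (familyJoin_adj_mk.1 hbc)
    (familyJoin_adj_mk.1 hcd) (mt familyJoin_adj_mk.2 hac) (mt familyJoin_adj_mk.2 had)
    (mt familyJoin_adj_mk.2 hbd) (ne_of_apply_ne (Sigma.mk i) hac')
    (ne_of_apply_ne (Sigma.mk i) had') (ne_of_apply_ne (Sigma.mk i) hbd')

def familyJoinCongr {H' : ∀ i, SimpleGraph (W' i)} (e : ∀ i, H i ≃g H' i) :
    familyJoin H ≃g familyJoin H' where
  toEquiv := Equiv.sigmaCongrRight fun i => (e i).toEquiv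
  map_rel_iff' := by
    rintro ⟨i, a⟩ ⟨j, b⟩
    by_cases hij : i = j
    · subst hij
      exact familyJoin_adj_mk.trans ((e i).map_adj_iff.trans familyJoin_adj_mk.symm)
    · exact iff_of_true (Or.inl hij) (Or.inl hij)

def isoFamilyJoinFibers {V : Type*} (G : SimpleGraph V) (q : V → ι)
    (hq : ∀ u v, u ≠ v → ¬ G.Adj u v → q u = q v) :
    G ≃g familyJoin (fun i => G.induce {v | q v = i}) where
  toEquiv := (Equiv.sigmaFiberEquiv q).symm
  map_rel_iff' := by
    intro u v
    by_cases huv : q u = q v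
    · have hv : (⟨q v, ⟨v, rfl⟩⟩ : Σ i : ι, ↥{x | q x = i}) = ⟨q u, ⟨v, huv.symm⟩⟩ :=
        Sigma.subtype_ext huv.symm rfl
      show (familyJoin fun i => G.induce {v | q v = i}).Adj ⟨q u, ⟨u, rfl⟩⟩ ⟨q v, ⟨v, rfl⟩⟩ ↔ _
      rw [hv, familyJoin_adj_mk]
      rfl
    · exact iff_of_true (Or.inl huv)
        (by_contra fun h => huv (hq u v (fun huv' => huv (congrArg q huv')) h))

end FamilyJoin

section Skips

variable {P : Type*} [PartialOrder P]

/-- `a < b` but not `a ⋖ b`: the non-edges of `ciGraph P` (`ciGraph_adj_iff`). -/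
def Skips (a b : P) : Prop := ∃ m, a < m ∧ m < b

theorem Skips.lt {a b : P} (h : Skips a b) : a < b :=
  let ⟨_, ham, hmb⟩ := h
  ham.trans hmb

theorem ciGraph_adj_iff {u v : P} (huv : u ≠ v) :
    (ciGraph P).Adj u v ↔ ¬ Skips u v ∧ ¬ Skips v u := by
  by_cases hcomp : u ≤ v ∨ v ≤ u
  swap
  · rw [not_or] at hcomp
    exact iff_of_true (Or.inr (Or.inr hcomp))
      ⟨fun h => hcomp.1 h.lt.le, fun h => hcomp.2 h.lt.le⟩
  wlog hle : u ≤ v generalizing u v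
  · rw [(ciGraph P).adj_comm, and_comm]
    exact this huv.symm hcomp.symm (hcomp.resolve_left hle)
  have hlt := hle.lt_of_ne huv
  have hvu : ¬ Skips v u := fun h => hlt.not_gt h.lt
  refine ⟨?_, fun h => Or.inl ((not_covBy_iff hlt).not_right.2 h.1)⟩
  rintro (h | h | h)
  exacts [⟨(not_covBy_iff hlt).not_right.1 h, hvu⟩, absurd h.lt hlt.not_gt, absurd hle h.1]

theorem not_adj_of_skips {u v : P} (h : Skips u v) : ¬ (ciGraph P).Adj u v :=
  fun hadj => ((ciGraph_adj_iff h.lt.ne).1 hadj).1 h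

theorem skips_or_skips_of_not_adj {u v : P} (huv : u ≠ v) (h : ¬ (ciGraph P).Adj u v) :
    Skips u v ∨ Skips v u := by
  rw [ciGraph_adj_iff huv] at h
  tauto

theorem skips_coe_iff {s : Set P} (hs : s.OrdConnected) {x y : s} :
    Skips (x : P) y ↔ Skips x y :=
  ⟨fun ⟨m, hxm, hmy⟩ => ⟨⟨m, hs.out x.2 y.2 ⟨hxm.le, hmy.le⟩⟩, hxm, hmy⟩,
    fun ⟨m, hxm, hmy⟩ => ⟨m, hxm, hmy⟩⟩

def ciGraphInduceIso {s : Set P} (hs : s.OrdConnected) : (ciGraph P).induce s ≃g ciGraph s where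
  toEquiv := Equiv.refl s
  map_rel_iff' {x y} := by
    obtain rfl | hxy := eq_or_ne x y
    · exact iff_of_false (ciGraph s).irrefl ((ciGraph P).irrefl)
    change (ciGraph s).Adj x y ↔ (ciGraph P).Adj x y
    rw [ciGraph_adj_iff hxy, ciGraph_adj_iff (Subtype.coe_injective.ne hxy),
      skips_coe_iff hs, skips_coe_iff hs]

end Skips

section Sigma

variable {ι : Type*} {α : ι → Type*} [∀ i, PartialOrder (α i)]

theorem skips_sigma_mk_iff {i : ι} {a b : α i} :
    Skips (⟨i, a⟩ : Σ i, α i) ⟨i, b⟩ ↔ Skips a b := by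
  refine ⟨?_, fun ⟨c, hac, hcb⟩ => ⟨⟨i, c⟩, Sigma.mk_lt_mk_iff.2 hac, Sigma.mk_lt_mk_iff.2 hcb⟩⟩
  rintro ⟨_, ⟨_, _, c, hac⟩, hcb⟩
  exact ⟨c, hac, Sigma.mk_lt_mk_iff.1 hcb⟩

theorem ciGraph_sigma : ciGraph (Σ i, α i) = familyJoin fun i => ciGraph (α i) := by
  ext ⟨i, a⟩ ⟨j, b⟩
  by_cases hij : i = j
  · subst hij
    rw [familyJoin_adj_mk]
    obtain rfl | hab := eq_or_ne a b
    · exact iff_of_false (ciGraph _).irrefl (ciGraph _).irrefl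
    rw [ciGraph_adj_iff hab, ciGraph_adj_iff (sigma_mk_injective.ne hab), skips_sigma_mk_iff,
      skips_sigma_mk_iff]
  · refine iff_of_true ((ciGraph_adj_iff fun h => hij (congrArg Sigma.fst h)).2 ?_) (Or.inl hij)
    exact ⟨fun h => hij (Sigma.lt_def.1 h.lt).1, fun h => hij (Sigma.lt_def.1 h.lt).1.symm⟩

theorem isCIGraph_familyJoin [Finite ι] {W : ι → Type*} (H : ∀ i, SimpleGraph (W i))
    (h : ∀ i, IsCIGraph (H i)) : IsCIGraph (familyJoin H) := by
  choose Q _ _ e using h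
  refine ⟨Σ i, Q i, inferInstance, inferInstance, ?_⟩
  rw [ciGraph_sigma]
  exact ⟨familyJoinCongr fun i => (e i).some⟩

end Sigma

section CographPoset

variable {P : Type*} [PartialOrder P]

theorem not_covBy_chain (hc : IsCograph (ciGraph P)) {a b c d : P} (hab : a ⋖ b) (hbc : b ⋖ c)
    (hcd : c ⋖ d) : False :=
  hc.false_of_path (Or.inl hab) (Or.inl hbc) (Or.inl hcd)
    (not_adj_of_skips ⟨b, hab.lt, hbc.lt⟩) (not_adj_of_skips ⟨b, hab.lt, hbc.lt.trans hcd.lt⟩)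
    (not_adj_of_skips ⟨c, hbc.lt, hcd.lt⟩) (hab.lt.trans hbc.lt).ne
    ((hab.lt.trans hbc.lt).trans hcd.lt).ne (hbc.lt.trans hcd.lt).ne

variable [Finite P]

theorem not_lt_chain (hc : IsCograph (ciGraph P)) {a b c d : P} (hab : a < b) (hbc : b < c)
    (hcd : c < d) : False := by
  obtain ⟨m₁, ham₁, hm₁b⟩ := exists_covBy_le_of_lt hab
  obtain ⟨m₂, hm₁m₂, hm₂c⟩ := exists_covBy_le_of_lt (hm₁b.trans_lt hbc)
  obtain ⟨m₃, hm₂m₃, -⟩ := exists_covBy_le_of_lt (hm₂c.trans_lt hcd)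
  exact not_covBy_chain hc ham₁ hm₁m₂ hm₂m₃

theorem Skips.isMin (hc : IsCograph (ciGraph P)) {b t : P} (h : Skips b t) : IsMin b :=
  isMin_iff_forall_not_lt.2 fun _ hab =>
    let ⟨_, hbm, hmt⟩ := h
    not_lt_chain hc hab hbm hmt

theorem Skips.isMax (hc : IsCograph (ciGraph P)) {b t : P} (h : Skips b t) : IsMax t :=
  isMax_iff_forall_not_lt.2 fun _ hta =>
    let ⟨_, hbm, hmt⟩ := h
    not_lt_chain hc hbm hmt hta

/-- Otherwise `y – x – t' – t` would be an induced `P₄`. -/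
theorem skips_of_skips_of_skips (hc : IsCograph (ciGraph P)) {x y t t' : P} (hxt : Skips x t)
    (hyt : Skips y t) (hyt' : Skips y t') : Skips x t' := by
  obtain rfl | hxy := eq_or_ne x y
  · exact hyt'
  obtain rfl | htt' := eq_or_ne t t'
  · exact hxt
  by_contra hxt'
  have hx := hxt.isMin hc
  have hy := hyt.isMin hc
  have ht := hxt.isMax hc
  have ht' := hyt'.isMax hc
  have hxt'_ne : x ≠ t' := by
    rintro rfl
    exact hx.not_lt hyt'.lt
  exact hc.false_of_path
    ((ciGraph_adj_iff hxy.symm).2 ⟨fun h => hx.not_lt h.lt, fun h => hy.not_lt h.lt⟩)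
    ((ciGraph_adj_iff hxt'_ne).2 ⟨hxt', fun h => hx.not_lt h.lt⟩)
    ((ciGraph_adj_iff htt'.symm).2 ⟨fun h => ht'.not_lt h.lt, fun h => ht.not_lt h.lt⟩)
    (not_adj_of_skips hyt') (not_adj_of_skips hyt) (not_adj_of_skips hxt)
    hyt'.lt.ne hyt.lt.ne hxt.lt.ne

theorem skips_of_mem_Icc (hc : IsCograph (ciGraph P)) {b t b' t' v : P} (hbt : Skips b t)
    (hbt' : Skips b' t') (hb : b ≤ v) (ht : v ≤ t) (hb' : b' ≤ v) (ht' : v ≤ t') :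
    Skips b t' := by
  obtain rfl | hbv := hb.eq_or_lt
  · obtain rfl := (hbt.isMin hc).eq_of_ge hb'
    exact hbt'
  obtain rfl | hvt' := ht'.eq_or_lt
  · obtain rfl := (hbt'.isMax hc).eq_of_le ht
    exact hbt
  exact ⟨v, hbv, hvt'⟩

/-- The tops of the block of skips whose intervals contain `v` (empty if there is none); by
`linkedTops_eq` it can be read off from any one skip `b < t₀` with `b ≤ v ≤ t₀`. -/
def linkedTops (v : P) : Set P := {t | ∃ b t₀, Skips b t₀ ∧ b ≤ v ∧ v ≤ t₀ ∧ Skips b t}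

theorem linkedTops_eq (hc : IsCograph (ciGraph P)) {b t₀ v : P} (hbt : Skips b t₀) (hb : b ≤ v)
    (ht : v ≤ t₀) : linkedTops v = {t | Skips b t} := by
  ext t
  refine ⟨?_, fun h => ⟨b, t₀, hbt, hb, ht, h⟩⟩
  rintro ⟨b', t₀', hbt', hb', ht', h⟩
  exact skips_of_skips_of_skips hc (skips_of_mem_Icc hc hbt hbt' hb ht hb' ht') hbt' h

theorem linkedTops_eq_of_not_adj (hc : IsCograph (ciGraph P)) {u v : P} (huv : u ≠ v)
    (h : ¬ (ciGraph P).Adj u v) : linkedTops u = linkedTops v := by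
  rcases skips_or_skips_of_not_adj huv h with h | h
  · rw [linkedTops_eq hc h le_rfl h.lt.le, linkedTops_eq hc h h.lt.le le_rfl]
  · rw [linkedTops_eq hc h h.lt.le le_rfl, linkedTops_eq hc h le_rfl h.lt.le]

theorem skips_of_linkedTops_eq (hc : IsCograph (ciGraph P)) {x y b t : P}
    (h : linkedTops x = linkedTops y) (hx : Skips x t) (hy : Skips b y) : Skips x y := by
  have hy' : y ∈ linkedTops y := ⟨b, y, hy, hy.lt.le, le_rfl, hy⟩
  rwa [← h, linkedTops_eq hc hx le_rfl hx.lt.le] at hy'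

noncomputable def summandIndex (v : P) : Fin (Nat.card (Set.range (linkedTops (P := P)))) :=
  Finite.equivFin _ ⟨linkedTops v, v, rfl⟩

theorem summandIndex_eq_iff {u v : P} :
    summandIndex u = summandIndex v ↔ linkedTops u = linkedTops v :=
  (Finite.equivFin _).injective.eq_iff.trans Subtype.ext_iff

theorem ordConnected_summand (hc : IsCograph (ciGraph P)) (i) :
    {v : P | summandIndex v = i}.OrdConnected := by
  refine ⟨fun u hu v _ m hm => ?_⟩
  obtain rfl | hum := hm.1.eq_or_lt
  · exact hu
  obtain rfl | hmv := hm.2.eq_or_lt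
  · assumption
  have huv : Skips u v := ⟨m, hum, hmv⟩
  refine (summandIndex_eq_iff.2 ?_).trans hu
  rw [linkedTops_eq hc huv hum.le hmv.le, linkedTops_eq hc huv le_rfl huv.lt.le]

/-- In an induced `C₄` the two non-edges are disjoint skips; the bottom of one and the top of the
other are adjacent in the cycle, but `skips_of_linkedTops_eq` makes them a skip. -/
theorem isEmpty_cycleGraph_four_embedding_summand (hc : IsCograph (ciGraph P)) (i) :
    IsEmpty (cycleGraph 4 ↪g (ciGraph P).induce {v | summandIndex v = i}) := by
  refine ⟨fun f => ?_⟩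
  let g := (Embedding.induce _).comp f
  have hsame : ∀ j j', linkedTops (g j) = linkedTops (g j') :=
    fun j j' => summandIndex_eq_iff.1 ((f j).2.trans (f j').2.symm)
  have hadj : ∀ j j' : Fin 4, j.val % 2 ≠ j'.val % 2 → (ciGraph P).Adj (g j) (g j') := by
    intro j j' h
    exact g.map_adj_iff.2 (by revert j j'; decide)
  have hskips : ∀ j j' : Fin 4, j.val + 2 = j'.val → Skips (g j) (g j') ∨ Skips (g j') (g j) := by
    intro j j' h
    exact skips_or_skips_of_not_adj (g.injective.ne (by omega))
      (mt g.map_adj_iff.1 (by revert j j'; decide))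
  obtain ⟨j, hj, t, hjt⟩ : ∃ j : Fin 4, j.val % 2 = 0 ∧ ∃ t, Skips (g j) t := by
    rcases hskips 0 2 rfl with h | h
    exacts [⟨0, rfl, _, h⟩, ⟨2, rfl, _, h⟩]
  obtain ⟨j', hj', b, hbj'⟩ : ∃ j : Fin 4, j.val % 2 = 1 ∧ ∃ b, Skips b (g j) := by
    rcases hskips 1 3 rfl with h | h
    exacts [⟨3, rfl, _, h⟩, ⟨1, rfl, _, h⟩]
  exact not_adj_of_skips (skips_of_linkedTops_eq hc (hsame j j') hjt hbj') (hadj j j' (by omega))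

end CographPoset

theorem exists_familyJoin_iso_ciGraph {P : Type u} [PartialOrder P] [Finite P]
    (hc : IsCograph (ciGraph P)) :
    ∃ (k : ℕ) (W : Fin k → Type u) (H : ∀ i, SimpleGraph (W i)),
      (∀ i, Finite (W i)) ∧ (∀ i, IsChordal (H i) ∧ IsCograph (H i) ∧ IsCIGraph (H i)) ∧
      Nonempty (ciGraph P ≃g familyJoin H) := by
  have hcograph : ∀ i, IsCograph ((ciGraph P).induce {v | summandIndex v = i}) :=
    fun i => hc.of_embedding (Embedding.induce _)
  refine ⟨_, fun i => {v : P | summandIndex v = i}, fun i => (ciGraph P).induce _,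
    fun _ => inferInstance, fun i => ⟨?_, hcograph i, ?_⟩, ⟨isoFamilyJoinFibers _ _ ?_⟩⟩
  · exact (hcograph i).isChordal (isEmpty_cycleGraph_four_embedding_summand hc i)
  · exact ⟨_, inferInstance, inferInstance, ⟨ciGraphInduceIso (ordConnected_summand hc i)⟩⟩
  · exact fun u v huv h => summandIndex_eq_iff.2 (linkedTops_eq_of_not_adj hc huv h)

theorem CI_cograph_iff_join_general {V : Type u} (G : SimpleGraph V) :
    (IsCograph G ∧ IsCIGraph G) ↔
      ∃ (k : ℕ) (W : Fin k → Type u) (H : ∀ i, SimpleGraph (W i)),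
        (∀ i, Finite (W i)) ∧
        (∀ i, IsChordal (H i) ∧ IsCograph (H i) ∧ IsCIGraph (H i)) ∧
        Nonempty (G ≃g familyJoin H) := by
  constructor
  · rintro ⟨hG, P, _, _, ⟨e⟩⟩
    obtain ⟨k, W, H, hfin, hH, ⟨e'⟩⟩ :=
      exists_familyJoin_iso_ciGraph (hG.of_embedding e.symm.toEmbedding)
    exact ⟨k, W, H, hfin, hH, ⟨e.trans e'⟩⟩
  · rintro ⟨k, W, H, -, hH, ⟨e⟩⟩
    refine ⟨(isCograph_familyJoin fun i => (hH i).2.1).of_embedding e.toEmbedding, ?_⟩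
    obtain ⟨P, hP, hfin, ⟨e'⟩⟩ := isCIGraph_familyJoin H fun i => (hH i).2.2
    exact ⟨P, hP, hfin, ⟨e.trans e'⟩⟩

/-- A finite graph is a C-I cograph iff it is (isomorphic to) the join of
finitely many chordal C-I cographs. -/
theorem CI_cograph_iff_join {V : Type u} [Finite V] (G : SimpleGraph V) :
    (IsCograph G ∧ IsCIGraph G) ↔
      ∃ (k : ℕ) (W : Fin k → Type u) (H : ∀ i, SimpleGraph (W i)),
        (∀ i, Finite (W i)) ∧
        (∀ i, IsChordal (H i) ∧ IsCograph (H i) ∧ IsCIGraph (H i)) ∧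
        Nonempty (G ≃g familyJoin H) :=
  CI_cograph_iff_join_general G
end

section
/- Let G be a finite graph that is a C-I cograph. Then for any three distinct vertices u, v, w of G, if u is not adjacent to v and u is not adjacent to w, then v is adjacent to w. -/
open SimpleGraph

/-!
A chain `p ⋖ q ⋖ r ⋖ s` of covers induces the path `p - q - r - s` in the C-I graph, and in a
finite poset any chain `a < b < c < d` yields such a chain of covers. Distinct vertices are
non-adjacent exactly when they are comparable without a cover between them. Three pairwise
non-adjacent vertices therefore form a chain `a < b < c` in which `a < b` is not a cover, and an
element strictly between `a` and `b` gives a four-element chain, hence an induced `P₄`.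
-/

theorem exists_covBy_covBy_covBy {α : Type*} [Preorder α] [IsStronglyAtomic α]
    [IsStronglyCoatomic α] {a b c d : α} (hab : a < b) (hbc : b < c) (hcd : c < d) :
    ∃ p q r s : α, p ⋖ q ∧ q ⋖ r ∧ r ⋖ s := by
  obtain ⟨r, hbr, hrc⟩ := exists_le_covBy_of_lt hbc
  obtain ⟨q, -, hqr⟩ := exists_le_covBy_of_lt (hab.trans_le hbr)
  obtain ⟨s, hcs, -⟩ := exists_covBy_le_of_lt hcd
  exact ⟨q, r, c, s, hqr, hrc, hcs⟩

theorem IsCograph.of_iso {V W : Type*} {G : SimpleGraph V} {H : SimpleGraph W} (e : G ≃g H)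
    (hG : IsCograph G) : IsCograph H := by
  rintro ⟨a, b, c, d, hab, hac, had, hbc, hbd, hcd, eab, ebc, ecd, nac, nad, nbd⟩
  have ne {x y : W} : x ≠ y → e.symm x ≠ e.symm y := e.symm.injective.ne
  have adj {x y : W} : G.Adj (e.symm x) (e.symm y) ↔ H.Adj x y := e.symm.map_adj_iff
  exact hG ⟨e.symm a, e.symm b, e.symm c, e.symm d, ne hab, ne hac, ne had, ne hbc, ne hbd,
    ne hcd, adj.2 eab, adj.2 ebc, adj.2 ecd, adj.not.2 nac, adj.not.2 nad, adj.not.2 nbd⟩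

namespace ciGraph

variable {P : Type*} [PartialOrder P]

theorem not_adj_of_lt_of_lt_s16 {x y z : P} (hxy : x < y) (hyz : y < z) : ¬ (ciGraph P).Adj x z := by
  rintro (h | h | h)
  · exact h.2 hxy hyz
  · exact h.lt.not_gt (hxy.trans hyz)
  · exact h.1 (hxy.trans hyz).le

theorem lt_and_not_covBy_of_not_adj {x y : P} (hne : x ≠ y) (h : ¬ (ciGraph P).Adj x y) :
    (x < y ∧ ¬ x ⋖ y) ∨ (y < x ∧ ¬ y ⋖ x) := by
  by_cases hxy : x ≤ y
  · exact .inl ⟨hxy.lt_of_ne hne, fun hc => h (.inl hc)⟩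
  by_cases hyx : y ≤ x
  · exact .inr ⟨hyx.lt_of_ne hne.symm, fun hc => h (.inr (.inl hc))⟩
  exact absurd (.inr (.inr ⟨hxy, hyx⟩)) h

theorem not_isCograph_of_covBy {p q r s : P} (hpq : p ⋖ q) (hqr : q ⋖ r) (hrs : r ⋖ s) :
    ¬ IsCograph (ciGraph P) := fun hcog =>
  hcog ⟨p, q, r, s, hpq.ne, (hpq.lt.trans hqr.lt).ne, (hpq.lt.trans (hqr.lt.trans hrs.lt)).ne,
    hqr.ne, (hqr.lt.trans hrs.lt).ne, hrs.ne, .inl hpq, .inl hqr, .inl hrs,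
    not_adj_of_lt_of_lt_s16 hpq.lt hqr.lt, not_adj_of_lt_of_lt_s16 hpq.lt (hqr.lt.trans hrs.lt),
    not_adj_of_lt_of_lt_s16 hqr.lt hrs.lt⟩

theorem not_lt_of_not_covBy [Finite P] (hcog : IsCograph (ciGraph P)) {x y z : P}
    (hxy : x < y) (hnc : ¬ x ⋖ y) : ¬ y < z := fun hyz => by
  obtain ⟨m, hxm, hmy⟩ := exists_lt_lt_of_not_covBy hxy hnc
  obtain ⟨p, q, r, s, hpq, hqr, hrs⟩ := exists_covBy_covBy_covBy hxm hmy hyz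
  exact not_isCograph_of_covBy hpq hqr hrs hcog

theorem adj_of_not_adj_of_not_adj [Finite P] (hcog : IsCograph (ciGraph P)) {u v w : P}
    (huv : u ≠ v) (huw : u ≠ w) (hvw : v ≠ w) (h1 : ¬ (ciGraph P).Adj u v)
    (h2 : ¬ (ciGraph P).Adj u w) : (ciGraph P).Adj v w := by
  by_contra h3
  have gap {x y z : P} : x < y → ¬ x ⋖ y → ¬ y < z := not_lt_of_not_covBy hcog
  rcases lt_and_not_covBy_of_not_adj huv h1 with ⟨l1, n1⟩ | ⟨l1, n1⟩ <;>
  rcases lt_and_not_covBy_of_not_adj huw h2 with ⟨l2, n2⟩ | ⟨l2, n2⟩ <;>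
  rcases lt_and_not_covBy_of_not_adj hvw h3 with ⟨l3, n3⟩ | ⟨l3, n3⟩
  · exact gap l1 n1 l3
  · exact gap l2 n2 l3
  · exact l1.asymm (l3.trans l2)
  · exact gap l2 n2 l1
  · exact gap l1 n1 l2
  · exact l3.asymm (l1.trans l2)
  · exact gap l3 n3 l2
  · exact gap l3 n3 l1

end ciGraph

theorem CI_cograph_nonadj_general {V : Type u} (G : SimpleGraph V)
    (hcog : IsCograph G) (hCI : IsCIGraph G)
    (u v w : V) (huv : u ≠ v) (huw : u ≠ w) (hvw : v ≠ w)
    (h1 : ¬ G.Adj u v) (h2 : ¬ G.Adj u w) : G.Adj v w := by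
  obtain ⟨Q, _, _, ⟨e⟩⟩ := hCI
  have key := ciGraph.adj_of_not_adj_of_not_adj (IsCograph.of_iso e hcog) (e.injective.ne huv)
    (e.injective.ne huw) (e.injective.ne hvw) (e.map_adj_iff.not.2 h1) (e.map_adj_iff.not.2 h2)
  exact e.map_adj_iff.1 key

/-- In a finite C-I cograph, if a vertex is non-adjacent to two other
(distinct) vertices, then those two vertices are adjacent. -/
theorem CI_cograph_nonadj {V : Type u} [Finite V] (G : SimpleGraph V)
    (hcog : IsCograph G) (hCI : IsCIGraph G)
    (u v w : V) (huv : u ≠ v) (huw : u ≠ w) (hvw : v ≠ w)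
    (h1 : ¬ G.Adj u v) (h2 : ¬ G.Adj u w) : G.Adj v w :=
  CI_cograph_nonadj_general G hcog hCI u v w huv huw hvw h1 h2
end
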